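/- Let T ≥ 2 and define f̄^{nc}: ℝ^T → ℝ by f̄^{nc}(x) = -Ψ(1)Φ(x₁) + Σ_{i=2}^{T}[Ψ(-x_{i-1})Φ(-x_i) - Ψ(x_{i-1})Φ(x_i)]. Then f̄^{nc} is a zero-chain: for every 2 ≤ i ≤ T and every x ∈ ℝ^T with x_{i-1} = 0 and x_i = 0, the partial derivative ∂f̄^{nc}/∂x_i(x) = 0; consequently, if x_j = 0 for all j ≥ i, then ∂f̄^{nc}/∂x_j(x) = 0 for all j ≥ i+1, i.e., supp(x) ⊆ {1,…,i-1} implies supp(∇f̄^{nc}(x)) ⊆ {1,…,i}. -/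

import Mathlib

/-!
Since `Ψ` vanishes on `(-∞, 1/2]`, every summand `Ψ(-a)Φ(-b) - Ψ(a)Φ(b)` of `f̄^{nc}` with
`|a| ≤ 1/2` is zero. The only summands in which `x_i` occurs are the one pairing
`(x_{i-1}, x_i)` and the one pairing `(x_i, x_{i+1})`, so near a point with `x_{i-1} = x_i = 0`
the function does not depend on `x_i` at all, and its `i`-th partial derivative vanishes.
-/

/-- `Ψ(x) = 0` for `x ≤ 1/2`, `exp(1 - 1/(2x-1)²)` for `x > 1/2`. -/
noncomputable def Psi (x : ℝ) : ℝ :=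
  if x ≤ 1 / 2 then 0 else Real.exp (1 - 1 / (2 * x - 1) ^ 2)

/-- `Φ(x) = √e · ∫_{-∞}^x e^{-t²/2} dt`. -/
noncomputable def Phi (x : ℝ) : ℝ :=
  Real.sqrt (Real.exp 1) * ∫ t in Set.Iic x, Real.exp (-t ^ 2 / 2)

/-- Carmon et al.'s unscaled nonconvex hard instance
`f̄^{nc}(x) = -Ψ(1)Φ(x₁) + Σ_{i=2}^{T} [Ψ(-x_{i-1})Φ(-x_i) - Ψ(x_{i-1})Φ(x_i)]`.
In Lean's 0-indexing, `x j` is the math variable `x_{j+1}`. -/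
noncomputable def fnc (T : ℕ) (hT : 2 ≤ T) (x : Fin T → ℝ) : ℝ :=
  -Psi 1 * Phi (x ⟨0, by omega⟩)
    + ∑ j : Fin (T - 1),
        (Psi (-x ⟨(j : ℕ), by have := j.isLt; omega⟩)
            * Phi (-x ⟨(j : ℕ) + 1, by have := j.isLt; omega⟩)
          - Psi (x ⟨(j : ℕ), by have := j.isLt; omega⟩)
            * Phi (x ⟨(j : ℕ) + 1, by have := j.isLt; omega⟩))

open Topology Filter

section LineConstant

variable {𝕜 E F : Type*} [NontriviallyNormedField 𝕜] [NormedAddCommGroup E] [NormedSpace 𝕜 E]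
  [NormedAddCommGroup F] [NormedSpace 𝕜 F]

theorem fderiv_apply_eq_zero_of_forall_add_smul {g : E → F} {x v : E}
    (hg : ∀ t : 𝕜, g (x + t • v) = g x) : fderiv 𝕜 g x v = 0 := by
  by_cases hd : DifferentiableAt 𝕜 g x
  · rw [← hd.lineDeriv_eq_fderiv, lineDeriv, funext hg, deriv_const]
  · rw [fderiv_zero_of_not_differentiableAt hd, zero_apply]

theorem fderiv_single_eq_zero_of_eventuallyEq_update {ι : Type*} [Fintype ι] [DecidableEq ι]
    {f : (ι → 𝕜) → F} {x : ι → 𝕜} {i : ι}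
    (hf : (fun y ↦ f (Function.update y i 0)) =ᶠ[𝓝 x] f) :
    fderiv 𝕜 f x (Pi.single i 1) = 0 := by
  rw [← hf.fderiv_eq]
  refine fderiv_apply_eq_zero_of_forall_add_smul fun t ↦ ?_
  congr 1
  ext k
  rcases eq_or_ne k i with rfl | hk <;> simp [*]

end LineConstant

theorem Psi_eq_zero_of_le {t : ℝ} (ht : t ≤ 1 / 2) : Psi t = 0 := if_pos ht

theorem Psi_neg_mul_Phi_neg_sub_eq_zero {a : ℝ} (ha : |a| ≤ 1 / 2) (b : ℝ) :
    Psi (-a) * Phi (-b) - Psi a * Phi b = 0 := by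
  rw [Psi_eq_zero_of_le ((neg_le_abs a).trans ha), Psi_eq_zero_of_le ((le_abs_self a).trans ha)]
  ring

theorem fnc_update_eq_of_abs_le (T : ℕ) (hT : 2 ≤ T) (y : Fin T → ℝ) (i : Fin T)
    (hi : 1 ≤ (i : ℕ)) (hprev : |y ⟨(i : ℕ) - 1, Nat.sub_lt_of_lt i.isLt⟩| ≤ 1 / 2)
    (hcur : |y i| ≤ 1 / 2) :
    fnc T hT (Function.update y i 0) = fnc T hT y := by
  unfold fnc
  congr 1
  · rw [Function.update_of_ne]; simp [Fin.ext_iff]; omega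
  · refine Finset.sum_congr rfl fun j _ ↦ ?_
    simp only [Function.update_apply, Fin.ext_iff]
    split_ifs with hj_eq hj_succ_eq
    · omega
    · rw [Psi_neg_mul_Phi_neg_sub_eq_zero (by simp),
        Psi_neg_mul_Phi_neg_sub_eq_zero (by convert hcur)]
    · have hprev_j : |y ⟨j, by omega⟩| ≤ 1 / 2 := by convert hprev; omega
      rw [Psi_neg_mul_Phi_neg_sub_eq_zero hprev_j, Psi_neg_mul_Phi_neg_sub_eq_zero hprev_j]
    · rfl

theorem fderiv_fnc_single_eq_zero (T : ℕ) (hT : 2 ≤ T) (x : Fin T → ℝ) (i : Fin T)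
    (hi : 1 ≤ (i : ℕ)) (hprev : x ⟨(i : ℕ) - 1, Nat.sub_lt_of_lt i.isLt⟩ = 0)
    (hcur : x i = 0) :
    fderiv ℝ (fnc T hT) x (Pi.single i 1) = 0 := by
  refine fderiv_single_eq_zero_of_eventuallyEq_update ?_
  have hsmall (k : Fin T) (hk : x k = 0) : ∀ᶠ y in 𝓝 x, |y k| ≤ 1 / 2 :=
    (continuous_apply k).abs.continuousAt (Iic_mem_nhds (by norm_num [hk]))
  filter_upwards [hsmall _ hprev, hsmall i hcur] with y hyprev hycur
  exact fnc_update_eq_of_abs_le T hT y i hi hyprev hycur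

/-- `f̄^{nc}` is a zero-chain: whenever `x_{i-1} = x_i = 0`, the `i`-th
partial derivative vanishes; consequently `supp(x) ⊆ {1,…,i-1}` implies
`supp(∇f̄^{nc}(x)) ⊆ {1,…,i}`. -/
theorem stmt_18 (T : ℕ) (hT : 2 ≤ T) :
    (∀ (x : Fin T → ℝ) (i : Fin T) (hi : 1 ≤ (i : ℕ)),
      x ⟨(i : ℕ) - 1, by omega⟩ = 0 → x i = 0 →
      fderiv ℝ (fnc T hT) x (Pi.single i 1) = 0) ∧
    (∀ (x : Fin T → ℝ) (i : ℕ),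
      (∀ j : Fin T, i ≤ (j : ℕ) → x j = 0) →
      ∀ j : Fin T, i < (j : ℕ) → fderiv ℝ (fnc T hT) x (Pi.single j 1) = 0) := by
  refine ⟨fderiv_fnc_single_eq_zero T hT, fun x i hx j hij ↦ ?_⟩
  exact fderiv_fnc_single_eq_zero T hT x j (by omega) (hx _ (Nat.le_sub_one_of_lt hij))
    (hx j hij.le)
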